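/- arXiv:1510.01114 — 2 statements merged into one kernel-verified Lean document; each statement's English description precedes it below -/
import Mathlib

section
/- Under assumptions (A1), (Aa) and (Ab), for every x ∈ Ḡ and every γ ∈ E the set 𝒜_{γ,x} of admissible controls is nonempty; that is, there exist a Borel measurable α : [0,∞) → A and an absolutely continuous y : [0,∞) → ℝ^m with y(t) = x + ∫_0^t f_γ(y(s), α(s)) ds and y(t) ∈ Ḡ for all t ≥ 0. -/
open MeasureTheory Set Real Filter
open scoped RealInnerProductSpace BigOperators Topology

noncomputable section

/-- `Vec n` is Euclidean space `ℝ^n`. -/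
abbrev Vec (n : ℕ) : Type := EuclideanSpace ℝ (Fin n)

/-- `y` is the (absolutely continuous) trajectory of the controlled ODE
`y'(t) = f(y(t), α(t))`, `y(0) = x`, written in integral form. -/
def IsTraj {m : ℕ} {U : Type} (f : Vec m → U → Vec m) (x : Vec m) (α : ℝ → U)
    (y : ℝ → Vec m) : Prop :=
  ∀ t : ℝ, 0 ≤ t → y t = x + ∫ s in (0:ℝ)..t, f (y s) (α s)

/-- `(α, y)` is an admissible control/trajectory pair: `α` is Borel measurable with
values in `A`, `y` is the corresponding trajectory and it stays in `S` for `t ≥ 0`. -/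
def AdmPair {m : ℕ} {U : Type} [MeasurableSpace U] (f : Vec m → U → Vec m)
    (A : Set U) (S : Set (Vec m)) (x : Vec m) (α : ℝ → U) (y : ℝ → Vec m) : Prop :=
  Measurable α ∧ (∀ t : ℝ, α t ∈ A) ∧ IsTraj f x α y ∧ ∀ t : ℝ, 0 ≤ t → y t ∈ S

/-- The closed star-shaped network `Ḡ = ∪_j [0,1] e_j`. -/
def Gbar {m N : ℕ} (e : Fin N → Vec m) : Set (Vec m) :=
  ⋃ j, (fun r : ℝ => r • e j) '' Icc (0:ℝ) 1

/-- `𝒢 = ∪_j [0,1) e_j`. -/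
def GbarOpen {m N : ℕ} (e : Fin N → Vec m) : Set (Vec m) :=
  ⋃ j, (fun r : ℝ => r • e j) '' Ico (0:ℝ) 1

/-- The open branch `J_j = (0,1) e_j`. -/
def Jbranch {m N : ℕ} (e : Fin N → Vec m) (j : Fin N) : Set (Vec m) :=
  (fun r : ℝ => r • e j) '' Ioo (0:ℝ) 1

/-- The constant control `a` is locally admissible at `x` (keeps some trajectory in `S`
on a nontrivial interval `[0,θ]`). -/
def LocAdm {m : ℕ} {U : Type} (f : Vec m → U → Vec m) (S : Set (Vec m)) (x : Vec m)
    (a : U) : Prop :=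
  ∃ θ > (0:ℝ), ∃ y : ℝ → Vec m,
    IsTraj f x (fun _ => a) y ∧ ∀ t ∈ Icc (0:ℝ) θ, y t ∈ S

/-- The set `A_{γ,x}` of locally admissible constant controls at `x`. -/
def LocAdmSet {m : ℕ} {U : Type} (f : Vec m → U → Vec m) (A : Set U) (S : Set (Vec m))
    (x : Vec m) : Set U :=
  {a ∈ A | LocAdm f S x a}

/-- Assumption (A1). -/
def AssumptionA1 {m d : ℕ} {E : Type} (A : Set (Vec d)) (f : E → Vec m → Vec d → Vec m)
    (C : ℝ) : Prop :=
  ∀ γ : E, UniformContinuousOn (fun p : Vec m × Vec d => f γ p.1 p.2) (univ ×ˢ A) ∧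
    (∀ x y : Vec m, ∀ a ∈ A, ⟪f γ x a - f γ y a, x - y⟫ ≤ C * ‖x - y‖ ^ 2) ∧
    (∀ x : Vec m, ∀ a ∈ A, ‖f γ x a‖ ≤ C)

/-- Assumption (A2). -/
def AssumptionA2 {m d : ℕ} {E : Type} (A : Set (Vec d))
    (lam : Vec m → E → Vec d → ℝ) (C : ℝ) : Prop :=
  ∀ γ : E, UniformContinuousOn (fun p : Vec m × Vec d => lam p.1 γ p.2) (univ ×ˢ A) ∧
    ∀ x y : Vec m, ∀ a ∈ A, 0 ≤ lam x γ a ∧ lam x γ a ≤ C ∧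
      |lam x γ a - lam y γ a| ≤ C * ‖x - y‖

/-- Assumption (A3). -/
def AssumptionA3 {m d : ℕ} {E : Type} [Fintype E] (A : Set (Vec d))
    (Q : Vec m → E → E → Vec d → ℝ) (C : ℝ) : Prop :=
  ∀ (x y : Vec m) (γ : E), ∀ a ∈ A,
    (∀ γ' : E, 0 ≤ Q x γ γ' a ∧ Q x γ γ' a ≤ 1) ∧
    (∑ γ' : E, Q x γ γ' a) = 1 ∧ Q x γ γ a = 0 ∧
    (∀ γ' : E, |Q x γ γ' a - Q y γ γ' a| ≤ C * ‖x - y‖)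

/-- Assumption (A4). -/
def AssumptionA4 {m d : ℕ} {E : Type} (A : Set (Vec d)) (l : E → Vec m → Vec d → ℝ)
    (C : ℝ) : Prop :=
  ∀ γ : E, UniformContinuousOn (fun p : Vec m × Vec d => l γ p.1 p.2) (univ ×ˢ A) ∧
    ∀ x y : Vec m, ∀ a ∈ A, |l γ x a| ≤ C ∧ |l γ x a - l γ y a| ≤ C * ‖x - y‖

/-- Assumption (Aa). -/
def AssumptionAa {m d N : ℕ} {E : Type} (e : Fin N → Vec m) (A : Set (Vec d))
    (f : E → Vec m → Vec d → Vec m) (Asets : E → Fin N → Set (Vec d)) (β : ℝ) : Prop :=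
  (∀ (γ : E) (j : Fin N), (Asets γ j).Nonempty ∧ Asets γ j ⊆ A) ∧
  (∀ (γ : E) (j : Fin N), ∀ x ∈ Jbranch e j,
      LocAdmSet (f γ) A (Gbar e) x = Asets γ j) ∧
  (∀ γ : E, LocAdmSet (f γ) A (Gbar e) 0
      = ⋃ j, {a ∈ Asets γ j | ∃ r : ℝ, 0 ≤ r ∧ f γ 0 a = r • e j}) ∧
  (∀ (γ : E) (j : Fin N),
      LocAdmSet (f γ) A (Gbar e) (e j) = {a ∈ Asets γ j | ⟪f γ (e j) a, e j⟫ ≤ 0} ∧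
      {a ∈ Asets γ j | ⟪f γ (e j) a, e j⟫ ≤ 0}.Nonempty) ∧
  (∀ (γ : E) (j : Fin N),
      {a ∈ Asets γ j | ⟪f γ (e j) a, e j⟫ ≤ 0} = Asets γ j ∨
      ∃ a ∈ Asets γ j, ⟪f γ (e j) a, e j⟫ < -β)

/-- Assumption (Ab); `act j` is the set of modes for which branch `j` is active. -/
def AssumptionAb {m d N : ℕ} {E : Type} (e : Fin N → Vec m)
    (f : E → Vec m → Vec d → Vec m) (Asets : E → Fin N → Set (Vec d))
    (act : Fin N → Set E) (β η κ : ℝ) : Prop :=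
  (∀ (j : Fin N), ∀ γ ∈ act j,
      ∃ ap ∈ Asets γ j, ∃ am ∈ Asets γ j,
        β < ⟪f γ 0 ap, e j⟫ ∧ ⟪f γ 0 am, e j⟫ < -β) ∧
  (∀ (j : Fin N), ∀ γ : E, γ ∉ act j →
      (∃ am ∈ Asets γ j, ∀ x ∈ Jbranch e j, ‖x‖ ≤ η →
          ⟪f γ x am, e j⟫ ≤ -β * ⟪x, e j⟫ ^ κ) ∧
      (∃ a0 ∈ Asets γ j, f γ 0 a0 = 0) ∧
      (∀ a ∈ Asets γ j, ∀ x ∈ Jbranch e j, ‖x‖ ≤ η → ⟪f γ x a, e j⟫ ≤ 0))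

/-- Assumption (Ac). -/
def AssumptionAc {m d N : ℕ} {E : Type} (l : E → Vec m → Vec d → ℝ)
    (Asets : E → Fin N → Set (Vec d)) (act : Fin N → Set E) : Prop :=
  ∀ (j : Fin N), ∀ γ : E, γ ∉ act j →
    ∀ a ∈ Asets γ j, ∀ b ∈ Asets γ j, l γ 0 a = l γ 0 b

/-- Assumption (Ac'). -/
def AssumptionAc' {m d N : ℕ} {E : Type} (lam : Vec m → E → Vec d → ℝ)
    (Q : Vec m → E → E → Vec d → ℝ) (Asets : E → Fin N → Set (Vec d))
    (act : Fin N → Set E) : Prop :=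
  ∀ (j : Fin N), ∀ γ : E, γ ∉ act j → ∀ a ∈ Asets γ j, ∀ b ∈ Asets γ j,
    lam 0 γ a = lam 0 γ b ∧ ∀ γ' : E, Q 0 γ γ' a = Q 0 γ γ' b

/-- Assumption (Ad). -/
def AssumptionAd {m d N : ℕ} {E : Type} (e : Fin N → Vec m) (A : Set (Vec d))
    (f : E → Vec m → Vec d → Vec m) (Asets : E → Fin N → Set (Vec d)) : Prop :=
  ∀ (j : Fin N) (γ : E), ∀ x ∈ Jbranch e j, ∃ θ > (0:ℝ),
    ∀ (α : ℝ → Vec d) (y : ℝ → Vec m), AdmPair (f γ) A (Gbar e) x α y →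
      ∀ᵐ t ∂(volume.restrict (Icc (0:ℝ) θ)), α t ∈ Asets γ j

/-- The set of discounted costs of admissible control/trajectory pairs (deterministic
problem); its infimum is the value function `v_0^δ`. -/
def v0Set {m : ℕ} {U E : Type} [MeasurableSpace U] (δ : ℝ)
    (f : E → Vec m → U → Vec m) (A : E → Set U) (S : Set (Vec m))
    (l : E → Vec m → U → ℝ) (x : Vec m) (γ : E) : Set ℝ :=
  {c | ∃ (α : ℝ → U) (y : ℝ → Vec m), AdmPair (f γ) (A γ) S x α y ∧
        c = ∫ t in Ioi (0:ℝ), exp (-(δ * t)) * l γ (y t) (α t)}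

/-- The set of one-jump iterated discounted costs with continuation value `w`;
its infimum is the iterated value function  `v_{m+1}^δ` when `w = v_m^δ`. -/
def iterSet {m : ℕ} {U E : Type} [MeasurableSpace U] [Fintype E] (δ : ℝ)
    (f : E → Vec m → U → Vec m) (A : E → Set U) (S : Set (Vec m))
    (l : E → Vec m → U → ℝ) (lam : Vec m → E → U → ℝ)
    (Q : Vec m → E → E → U → ℝ) (w : Vec m → E → ℝ) (x : Vec m) (γ : E) : Set ℝ :=
  {c | ∃ (α : ℝ → U) (y : ℝ → Vec m), AdmPair (f γ) (A γ) S x α y ∧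
        c = ∫ t in Ioi (0:ℝ),
              exp (-(δ * t)) * exp (-(∫ s in (0:ℝ)..t, lam (y s) γ (α s))) *
              (l γ (y t) (α t) +
                lam (y t) γ (α t) * ∑ γ' : E, Q (y t) γ γ' (α t) * w (y t) γ')}

/-- The set of costs appearing in the dynamic programming principle on horizon `T`,
with running continuation value `wcont` and terminal value `wend`. -/
def dppSet {m : ℕ} {U E : Type} [MeasurableSpace U] [Fintype E] (δ T : ℝ)
    (f : E → Vec m → U → Vec m) (A : E → Set U) (S : Set (Vec m))
    (l : E → Vec m → U → ℝ) (lam : Vec m → E → U → ℝ)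
    (Q : Vec m → E → E → U → ℝ) (wcont wend : Vec m → E → ℝ)
    (x : Vec m) (γ : E) : Set ℝ :=
  {c | ∃ (α : ℝ → U) (y : ℝ → Vec m), AdmPair (f γ) (A γ) S x α y ∧
        c = (∫ t in (0:ℝ)..T,
              exp (-(δ * t)) * exp (-(∫ s in (0:ℝ)..t, lam (y s) γ (α s))) *
              (l γ (y t) (α t) +
                lam (y t) γ (α t) * ∑ γ' : E, Q (y t) γ γ' (α t) * wcont (y t) γ'))
            + exp (-(δ * T)) * exp (-(∫ s in (0:ℝ)..T, lam (y s) γ (α s)))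
              * wend (y T) γ}

/-- The tangent cone `T_x(Ḡ)` to the star network at `x`. -/
def TangentG {m N : ℕ} (e : Fin N → Vec m) (x : Vec m) : Set (Vec m) :=
  {ξ | (x = 0 ∧ ∃ (j : Fin N) (r : ℝ), 0 ≤ r ∧ ξ = r • e j) ∨
       (∃ j : Fin N, x = e j ∧ ∃ r : ℝ, r ≤ 0 ∧ ξ = r • e j) ∨
       (∃ j : Fin N, x ∈ Jbranch e j ∧ ∃ r : ℝ, ξ = r • e j)}

/-- `fl(x,γ,a) = (f_γ(x,a), λ(x,γ,a) Q(x,γ,·,a), l_γ(x,a))`. -/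
def flMap {m d : ℕ} {E : Type} (f : E → Vec m → Vec d → Vec m)
    (lam : Vec m → E → Vec d → ℝ) (Q : Vec m → E → E → Vec d → ℝ)
    (l : E → Vec m → Vec d → ℝ) (x : Vec m) (γ : E) :
    Vec d → Vec m × (E → ℝ) × ℝ :=
  fun a => (f γ x a, fun γ' => lam x γ a * Q x γ γ' a, l γ x a)

/-- The set `FL(x,γ)` of relaxed dynamics/jump/cost limits. -/
def FLset {m d N : ℕ} {E : Type} [Fintype E] (e : Fin N → Vec m) (A : Set (Vec d))
    (f : E → Vec m → Vec d → Vec m) (lam : Vec m → E → Vec d → ℝ)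
    (Q : Vec m → E → E → Vec d → ℝ) (l : E → Vec m → Vec d → ℝ)
    (x : Vec m) (γ : E) : Set (Vec m × (E → ℝ) × ℝ) :=
  {p | p.1 ∈ TangentG e x ∧ (∀ γ' : E, 0 ≤ p.2.1 γ') ∧
    ∃ (αs : ℕ → ℝ → Vec d) (ys : ℕ → ℝ → Vec m) (ts : ℕ → ℝ),
      (∀ n, AdmPair (f γ) A (Gbar e) x (αs n) (ys n)) ∧
      (∀ n, 0 < ts n) ∧ Tendsto ts atTop (nhds 0) ∧
      Tendsto (fun n => (ts n)⁻¹ • (∫ s in (0:ℝ)..ts n, f γ x (αs n s)))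
        atTop (nhds p.1) ∧
      (∀ γ' : E, Tendsto
          (fun n => (ts n)⁻¹ * ∫ s in (0:ℝ)..ts n, lam x γ (αs n s) * Q x γ γ' (αs n s))
          atTop (nhds (p.2.1 γ'))) ∧
      Tendsto (fun n => (ts n)⁻¹ * ∫ s in (0:ℝ)..ts n, l γ x (αs n s))
        atTop (nhds p.2.2)}


/-!
Every point of `Ḡ` admits a locally admissible constant control. On an open branch and at an
endpoint `e_j` this is part of (Aa). At the junction (Aa) asks for a control pushing into some
branch: for an inactive mode (Ab) provides a control at rest, and for an active mode the control
pushing outwards along `e_j` is admissible at every point of `J_j`, so the dynamics is tangent to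
the branch there and, by continuity, at `O`.

Local admissibility gives a global admissible trajectory by Zorn's lemma, applied to partial
trajectories ordered by extension. A chain is glued along a cofinal sequence; if its lengths are
bounded, the glued trajectory is Lipschitz, so it extends to the supremal time and stays in the
closed set `Ḡ`. A partial trajectory is never maximal, since it can be prolonged by a locally
admissible control from its endpoint.
-/

section Trajectories

variable {m : ℕ} {U : Type} {F : Vec m → U → Vec m} {A : Set U} {C T : ℝ}
  {x : Vec m} {α : ℝ → U} {y : ℝ → Vec m}

def SolvesOn (F : Vec m → U → Vec m) (x : Vec m) (α : ℝ → U) (y : ℝ → Vec m) (T : ℝ) :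
    Prop :=
  ∀ t ∈ Icc 0 T, y t = x + ∫ s in (0:ℝ)..t, F (y s) (α s)

lemma IsTraj.solvesOn (h : IsTraj F x α y) (T : ℝ) : SolvesOn F x α y T :=
  fun t ht => h t ht.1

lemma SolvesOn.mono {T' : ℝ} (h : SolvesOn F x α y T) (hT : T' ≤ T) : SolvesOn F x α y T' :=
  fun t ht => h t (Icc_subset_Icc_right hT ht)

lemma SolvesOn.congr {α' : ℝ → U} {y' : ℝ → Vec m} (h : SolvesOn F x α y T)
    (hα : EqOn α' α (Icc 0 T)) (hy : EqOn y' y (Icc 0 T)) : SolvesOn F x α' y' T := by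
  intro t ht
  rw [hy ht, h t ht]
  congr 1
  refine intervalIntegral.integral_congr fun s hs => ?_
  rw [uIcc_of_le ht.1] at hs
  have hsT : s ∈ Icc 0 T := Icc_subset_Icc_right ht.2 hs
  simp only [hα hsT, hy hsT]

lemma dist_le_of_eq_add_integral {X : Type*} [NormedAddCommGroup X] [NormedSpace ℝ X]
    {g : ℝ → X} {z : ℝ → X} {x : X} (hg : ∀ s, ‖g s‖ ≤ C) {s t : ℝ}
    (hs : z s = x + ∫ u in (0:ℝ)..s, g u) (ht : z t = x + ∫ u in (0:ℝ)..t, g u)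
    (hgs : IntervalIntegrable g volume 0 s) (hgt : IntervalIntegrable g volume 0 t) :
    dist (z t) (z s) ≤ C * dist t s := by
  rw [dist_eq_norm, hs, ht, add_sub_add_left_eq_sub,
    intervalIntegral.integral_interval_sub_left hgt hgs, Real.dist_eq]
  exact intervalIntegral.norm_integral_le_of_norm_le_const fun u _ => hg u

def concatAt {β : Type*} (T : ℝ) (f g : ℝ → β) (t : ℝ) : β :=
  if t ≤ T then f t else g (t - T)

lemma integral_concatAt {X : Type*} [NormedAddCommGroup X] [NormedSpace ℝ X]
    {g₁ g₂ : ℝ → X} {t : ℝ} (hT : 0 ≤ T) (hTt : T ≤ t)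
    (h₁ : IntervalIntegrable g₁ volume 0 T) (h₂ : IntervalIntegrable g₂ volume 0 (t - T)) :
    ∫ s in (0:ℝ)..t, concatAt T g₁ g₂ s =
      (∫ s in (0:ℝ)..T, g₁ s) + ∫ s in (0:ℝ)..(t - T), g₂ s := by
  have e₁ : EqOn g₁ (concatAt T g₁ g₂) (uIcc 0 T) := fun s hs =>
    (if_pos (by rw [uIcc_of_le hT] at hs; exact hs.2)).symm
  have e₂ : EqOn (fun s => g₂ (s - T)) (concatAt T g₁ g₂) (uIoc T t) := fun s hs =>
    (if_neg (by rw [uIoc_of_le hTt] at hs; exact not_le.2 hs.1)).symm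
  have h₂' : IntervalIntegrable (fun s => g₂ (s - T)) volume T t := by
    simpa using h₂.comp_sub_right T
  rw [← intervalIntegral.integral_add_adjacent_intervals
      (h₁.congr (e₁.mono uIoc_subset_uIcc)) (h₂'.congr e₂),
    ← intervalIntegral.integral_congr e₁,
    ← intervalIntegral.integral_congr_ae (ae_of_all _ fun s hs => e₂ hs),
    intervalIntegral.integral_comp_sub_right, sub_self]

lemma SolvesOn.concat {α' : ℝ → U} {w : ℝ → Vec m} {θ : ℝ} (hT : 0 ≤ T)
    (h : SolvesOn F x α y T) (hw : SolvesOn F (y T) α' w θ)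
    (hi : IntervalIntegrable (fun s => F (y s) (α s)) volume 0 T)
    (hiw : IntervalIntegrable (fun s => F (w s) (α' s)) volume 0 θ) :
    SolvesOn F x (concatAt T α α') (concatAt T y w) (T + θ) := by
  intro t ht
  by_cases htT : t ≤ T
  · exact h.congr (α' := concatAt T α α') (y' := concatAt T y w) (fun s hs => if_pos hs.2)
      (fun s hs => if_pos hs.2) t ⟨ht.1, htT⟩
  have hθ : t - T ∈ Icc 0 θ := ⟨by linarith, by linarith [ht.2]⟩
  have hF : (fun s => F (concatAt T y w s) (concatAt T α α' s)) =
      concatAt T (fun s => F (y s) (α s)) (fun s => F (w s) (α' s)) := by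
    funext s
    unfold concatAt
    split_ifs <;> rfl
  rw [hF, integral_concatAt hT (not_le.1 htT).le hi
      (hiw.mono_set (uIcc_subset_uIcc_left (mem_uIcc_of_le hθ.1 hθ.2))),
    ← add_assoc, ← h T ⟨hT, le_rfl⟩, concatAt, if_neg htT]
  exact hw _ hθ

variable [TopologicalSpace U]

lemma ContinuousOn.continuous_apply_of_mem
    (hF : ContinuousOn (fun p : Vec m × U => F p.1 p.2) (univ ×ˢ A)) {a : U} (ha : a ∈ A) :
    Continuous fun v => F v a :=
  continuousOn_univ.1 <|
    hF.comp (continuous_id.prodMk continuous_const).continuousOn fun _ _ => ⟨mem_univ _, ha⟩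

variable [MeasurableSpace U] [BorelSpace U] [SecondCountableTopology U]

lemma ContinuousOn.aestronglyMeasurable_comp_prod
    (hF : ContinuousOn (fun p : Vec m × U => F p.1 p.2) (univ ×ˢ A))
    (hα : Measurable α) (hαA : ∀ t, α t ∈ A) {u : ℝ → Vec m} {μ : Measure ℝ}
    (hu : AEStronglyMeasurable u μ) : AEStronglyMeasurable (fun s => F (u s) (α s)) μ := by
  obtain ⟨v, hv, huv⟩ := hu.aemeasurable
  have hvα : Measurable fun s => (⟨(v s, α s), mem_univ _, hαA s⟩ : ↥(univ ×ˢ A)) :=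
    (hv.prodMk hα).subtype_mk
  refine (hF.domRestrict.measurable.comp hvα).aestronglyMeasurable.congr ?_
  filter_upwards [huv] with s hs
  simp [hs]

/-- The integral equation alone does not make its integrand integrable (a non-integrable
integrand has integral `0`); boundedness and measurability of the dynamics do. -/
lemma SolvesOn.intervalIntegrable
    (hF : ContinuousOn (fun p : Vec m × U => F p.1 p.2) (univ ×ˢ A))
    (hFb : ∀ z, ∀ a ∈ A, ‖F z a‖ ≤ C) (hα : Measurable α) (hαA : ∀ t, α t ∈ A)
    (hT : 0 ≤ T) (h : SolvesOn F x α y T) :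
    IntervalIntegrable (fun s => F (y s) (α s)) volume 0 T := by
  set g := fun s => F (y s) (α s)
  have hg : ∀ s, ‖g s‖ ≤ C := fun s => hFb _ _ (hαA s)
  -- off `S` the equation degenerates to `y t = x`, on `S` it makes `y` Lipschitz
  set S := {t ∈ Icc 0 T | IntervalIntegrable g volume 0 t}
  have hS : S.OrdConnected := ⟨fun s hs t ht u hu =>
    ⟨⟨hs.1.1.trans hu.1, hu.2.trans ht.1.2⟩,
      ht.2.mono_set (uIcc_subset_uIcc_left (mem_uIcc_of_le (hs.1.1.trans hu.1) hu.2))⟩⟩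
  have hlip : LipschitzOnWith C.toNNReal y S := LipschitzOnWith.of_dist_le' fun t ht s hs =>
    dist_le_of_eq_add_integral hg (h s hs.1) (h t ht.1) hs.2 ht.2
  have hoff : EqOn y (fun _ => x) (Icc 0 T \ S) := fun t ht => by
    rw [h t ht.1, intervalIntegral.integral_undef fun hi => ht.2 ⟨ht.1, hi⟩, add_zero]
  have hy : AEStronglyMeasurable y (volume.restrict (Icc 0 T)) := by
    rw [← union_sdiff_cancel (sep_subset (Icc 0 T) _), aestronglyMeasurable_union_iff]
    exact ⟨hlip.continuousOn.aestronglyMeasurable hS.measurableSet,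
      aestronglyMeasurable_const.congr <| EventuallyEq.symm <|
        (ae_restrict_iff' (measurableSet_Icc.diff hS.measurableSet)).2 (ae_of_all _ hoff)⟩
  rw [intervalIntegrable_iff_integrableOn_Icc_of_le hT]
  exact Integrable.mono' (integrable_const C) (hF.aestronglyMeasurable_comp_prod hα hαA hy)
    (ae_of_all _ hg)

lemma SolvesOn.lipschitzOnWith
    (hF : ContinuousOn (fun p : Vec m × U => F p.1 p.2) (univ ×ˢ A))
    (hFb : ∀ z, ∀ a ∈ A, ‖F z a‖ ≤ C) (hα : Measurable α) (hαA : ∀ t, α t ∈ A)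
    (h : SolvesOn F x α y T) : LipschitzOnWith C.toNNReal y (Icc 0 T) :=
  LipschitzOnWith.of_dist_le' fun t ht s hs =>
    dist_le_of_eq_add_integral (fun u => hFb _ _ (hαA u)) (h s hs) (h t ht)
      ((h.mono hs.2).intervalIntegrable hF hFb hα hαA hs.1)
      ((h.mono ht.2).intervalIntegrable hF hFb hα hαA ht.1)

lemma exists_solvesOn_of_forall_lt
    (hF : ContinuousOn (fun p : Vec m × U => F p.1 p.2) (univ ×ˢ A))
    (hFb : ∀ z, ∀ a ∈ A, ‖F z a‖ ≤ C) (hα : Measurable α) (hαA : ∀ t, α t ∈ A)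
    {S : Set (Vec m)} (hS : IsClosed S) (hT : 0 < T)
    (h : ∀ t < T, SolvesOn F x α y t) (hyS : ∀ t ∈ Ico 0 T, y t ∈ S) :
    ∃ y' : ℝ → Vec m, EqOn y' y (Ico 0 T) ∧ SolvesOn F x α y' T ∧ ∀ t ∈ Icc 0 T, y' t ∈ S := by
  set g := fun s => F (y s) (α s)
  have hg : ∀ s, ‖g s‖ ≤ C := fun s => hFb _ _ (hαA s)
  have hlip : LipschitzOnWith C.toNNReal y (Ico 0 T) := LipschitzOnWith.of_dist_le'
    fun t ht s hs => dist_le_of_eq_add_integral hg (h s hs.2 s ⟨hs.1, le_rfl⟩)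
      (h t ht.2 t ⟨ht.1, le_rfl⟩) ((h s hs.2).intervalIntegrable hF hFb hα hαA hs.1)
      ((h t ht.2).intervalIntegrable hF hFb hα hαA ht.1)
  have hgi : IntegrableOn g (Icc 0 T) := by
    rw [← intervalIntegrable_iff_integrableOn_Icc_of_le hT.le,
      intervalIntegrable_iff_integrableOn_Ico_of_le hT.le]
    exact Integrable.mono' (integrable_const C) (hF.aestronglyMeasurable_comp_prod hα hαA
      (hlip.continuousOn.aestronglyMeasurable measurableSet_Ico)) (ae_of_all _ hg)
  -- the primitive of the dynamics agrees with `y` before `T` and is continuous up to `T`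
  set y' := fun t => x + ∫ s in (0:ℝ)..t, g s
  have hy' : EqOn y' y (Ico 0 T) := fun t ht => (h t ht.2 t ⟨ht.1, le_rfl⟩).symm
  refine ⟨y', hy', fun t ht => ?_, fun t ht => ?_⟩
  · show x + ∫ s in (0:ℝ)..t, g s = x + ∫ s in (0:ℝ)..t, F (y' s) (α s)
    rw [intervalIntegral.integral_of_le ht.1, intervalIntegral.integral_of_le ht.1,
      integral_Ioc_eq_integral_Ioo, integral_Ioc_eq_integral_Ioo]
    congr 1
    refine setIntegral_congr_fun measurableSet_Ioo fun s hs => ?_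
    simp only [g, hy' ⟨hs.1.le, hs.2.trans_le ht.2⟩]
  · have hcont : ContinuousOn y' (Icc 0 T) := by
      have := intervalIntegral.continuousOn_primitive_interval (a := 0) (b := T)
        (by rwa [uIcc_of_le hT.le])
      rw [uIcc_of_le hT.le] at this
      exact continuousOn_const.add this
    have := ((hcont t ht).mono Ico_subset_Icc_self).mem_closure
      (by rwa [closure_Ico hT.ne]) fun s hs => (hy' hs).symm ▸ hyS s hs
    rwa [hS.closure_eq] at this

lemma LocAdm.apply_mem
    (hF : ContinuousOn (fun p : Vec m × U => F p.1 p.2) (univ ×ˢ A))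
    (hFb : ∀ z, ∀ a ∈ A, ‖F z a‖ ≤ C) {S : Set (Vec m)} {z : Vec m} {a : U} (ha : a ∈ A)
    {V : Submodule ℝ (Vec m)} (hz : z ∈ V) (hSV : ∀ᶠ p in 𝓝 z, p ∈ S → p ∈ V)
    (h : LocAdm F S z a) : F z a ∈ V := by
  obtain ⟨θ, hθ, w, hw, hwS⟩ := h
  have hsol : SolvesOn F z (fun _ => a) w θ := hw.solvesOn θ
  set g := fun s => F (w s) a
  have hgc : ContinuousOn g (Icc 0 θ) := (hF.continuous_apply_of_mem ha).comp_continuousOn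
    (hsol.lipschitzOnWith hF hFb measurable_const fun _ => ha).continuousOn
  have hgi := hsol.intervalIntegrable hF hFb measurable_const (fun _ => ha) hθ.le
  have hw0 : w 0 = z := by simpa using hw 0 le_rfl
  have hderiv : HasDerivWithinAt w (g 0) (Ici 0) 0 := by
    have := intervalIntegral.integral_hasDerivWithinAt_right (a := 0) (b := 0) (f := g)
      (s := Ici 0) (t := Ioi 0) IntervalIntegrable.refl
      ⟨Ioc 0 θ, Ioc_mem_nhdsGT hθ,
        ((intervalIntegrable_iff_integrableOn_Ioc_of_le hθ.le).1 hgi).aestronglyMeasurable⟩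
      ((hgc 0 (left_mem_Icc.2 hθ.le)).mono_of_mem_nhdsWithin (Icc_mem_nhdsGT hθ))
    exact (this.const_add z).congr (fun t ht => hw t ht) (hw 0 le_rfl)
  -- the difference quotients of `w` at `0` lie in `V` and tend to `F z a`
  have hslope := hasDerivWithinAt_iff_tendsto_slope.1 hderiv
  rw [Ici_sdiff_left] at hslope
  have hwt : Tendsto w (𝓝[>] 0) (𝓝 z) :=
    hw0 ▸ hderiv.continuousWithinAt.mono Ioi_subset_Ici_self
  simp only [g, hw0] at hslope
  refine (Submodule.closed_of_finiteDimensional V).mem_of_tendsto hslope ?_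
  filter_upwards [hwt.eventually hSV, Icc_mem_nhdsGT hθ] with t htV htθ
  rw [slope_def_module, hw0]
  exact V.smul_mem _ (V.sub_mem (htV (hwS t htθ)) hz)

end Trajectories

section Viability

variable {m : ℕ} {U : Type} [MeasurableSpace U] {F : Vec m → U → Vec m} {A : Set U}
  {S : Set (Vec m)} {x : Vec m}

structure PartialSol (F : Vec m → U → Vec m) (A : Set U) (S : Set (Vec m)) (x : Vec m) where
  T : ℝ
  α : ℝ → U
  y : ℝ → Vec m
  T_nonneg : 0 ≤ T
  measurable : Measurable α
  mem_A : ∀ t, α t ∈ A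
  solvesOn : SolvesOn F x α y T
  mem_S : ∀ t ∈ Icc 0 T, y t ∈ S

namespace PartialSol

instance : Preorder (PartialSol F A S x) where
  le p q := p.T ≤ q.T ∧ EqOn q.α p.α (Icc 0 p.T) ∧ EqOn q.y p.y (Icc 0 p.T)
  le_refl _ := ⟨le_rfl, fun _ _ => rfl, fun _ _ => rfl⟩
  le_trans _ _ _ hpq hqr := ⟨hpq.1.trans hqr.1,
    fun _ ht => (hqr.2.1 (Icc_subset_Icc_right hpq.1 ht)).trans (hpq.2.1 ht),
    fun _ ht => (hqr.2.2 (Icc_subset_Icc_right hpq.1 ht)).trans (hpq.2.2 ht)⟩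

def const (hx : x ∈ S) {a : U} (ha : a ∈ A) : PartialSol F A S x where
  T := 0
  α _ := a
  y _ := x
  T_nonneg := le_rfl
  measurable := measurable_const
  mem_A _ := ha
  solvesOn t ht := by simp [le_antisymm ht.2 ht.1]
  mem_S _ _ := hx

variable {c : Set (PartialSol F A S x)} {p q : PartialSol F A S x}

lemma le_of_isChain (hc : IsChain (· ≤ ·) c) (hp : p ∈ c) (hq : q ∈ c) (hT : p.T ≤ q.T) :
    p ≤ q := by
  rcases eq_or_ne p q with rfl | hne
  · exact le_rfl
  rcases hc hp hq hne with h | h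
  · exact h
  have hT' : q.T = p.T := h.1.antisymm hT
  exact ⟨hT, fun t ht => (h.2.1 (hT' ▸ ht)).symm, fun t ht => (h.2.2 (hT' ▸ ht)).symm⟩

lemma eq_of_isChain (hc : IsChain (· ≤ ·) c) (hp : p ∈ c) (hq : q ∈ c) {t : ℝ}
    (ht : t ∈ Icc 0 p.T) (htq : t ≤ q.T) : q.α t = p.α t ∧ q.y t = p.y t := by
  rcases le_total p.T q.T with h | h
  · have hpq := le_of_isChain hc hp hq h
    exact ⟨hpq.2.1 ht, hpq.2.2 ht⟩
  · have hqp := le_of_isChain hc hq hp h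
    exact ⟨(hqp.2.1 ⟨ht.1, htq⟩).symm, (hqp.2.2 ⟨ht.1, htq⟩).symm⟩

/-- At time `t` the glued pair follows the first member of the sequence defined at `t`; this
index depends measurably on `t`. -/
lemma exists_glue {ps : ℕ → PartialSol F A S x} (hc : IsChain (· ≤ ·) (range ps)) :
    ∃ (α : ℝ → U) (y : ℝ → Vec m), Measurable α ∧ (∀ t, α t ∈ A) ∧
      ∀ n, EqOn α (ps n).α (Icc 0 (ps n).T) ∧ EqOn y (ps n).y (Icc 0 (ps n).T) := by
  classical
  have hex : ∀ t : ℝ, ∃ n, t ≤ (ps n).T ∨ ∀ k, (ps k).T < t := fun t => by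
    by_cases h : ∃ n, t ≤ (ps n).T
    · exact h.imp fun _ => Or.inl
    · exact ⟨0, Or.inr fun k => not_le.1 fun hk => h ⟨k, hk⟩⟩
  refine ⟨fun t => (ps (Nat.find (hex t))).α t, fun t => (ps (Nat.find (hex t))).y t,
    Measurable.find (fun n => (ps n).measurable) (fun n => ?_) hex,
    fun t => (ps _).mem_A t, fun n => ⟨fun t ht => ?_, fun t ht => ?_⟩⟩
  · have : {t | t ≤ (ps n).T ∨ ∀ k, (ps k).T < t} = Iic (ps n).T ∪ ⋂ k, Ioi (ps k).T := by
      ext; simp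
    rw [this]
    exact measurableSet_Iic.union (.iInter fun _ => measurableSet_Ioi)
  all_goals
    have hfind : t ≤ (ps (Nat.find (hex t))).T :=
      (Nat.find_spec (hex t)).resolve_right fun h => (h n).not_ge ht.2
  · exact (eq_of_isChain hc (mem_range_self n) (mem_range_self _) ht hfind).1
  · exact (eq_of_isChain hc (mem_range_self n) (mem_range_self _) ht hfind).2

lemma exists_admPair_of_not_bddAbove (hc : IsChain (· ≤ ·) c) (hunb : ¬ BddAbove (T '' c)) :
    ∃ α y, AdmPair F A S x α y := by
  have : ∀ n : ℕ, ∃ p ∈ c, (n : ℝ) ≤ p.T := fun n => by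
    by_contra! h
    exact hunb ⟨n, forall_mem_image.2 fun p hp => (h p hp).le⟩
  choose ps hps hn using this
  obtain ⟨α, y, hα, hαA, hglue⟩ := exists_glue (hc.mono (range_subset_iff.2 hps))
  refine ⟨α, y, hα, hαA, fun t ht => ?_, fun t ht => ?_⟩ <;>
  obtain ⟨n, htn⟩ := exists_nat_ge t <;>
  have ht' : t ∈ Icc 0 (ps n).T := ⟨ht, htn.trans (hn n)⟩
  · exact (ps n).solvesOn.congr (hglue n).1 (hglue n).2 t ht'
  · rw [(hglue n).2 ht']
    exact (ps n).mem_S t ht'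

variable [TopologicalSpace U] [BorelSpace U] [SecondCountableTopology U] {C : ℝ}

lemma bddAbove_of_isChain (hF : ContinuousOn (fun p : Vec m × U => F p.1 p.2) (univ ×ˢ A))
    (hFb : ∀ z, ∀ a ∈ A, ‖F z a‖ ≤ C) (hS : IsClosed S) (hno : ¬ ∃ α y, AdmPair F A S x α y)
    (hc : IsChain (· ≤ ·) c) (hne : c.Nonempty) : BddAbove c := by
  have hbdd : BddAbove (T '' c) := by_contra fun h => hno (exists_admPair_of_not_bddAbove hc h)
  by_cases hmax : ∃ p ∈ c, ∀ q ∈ c, q.T ≤ p.T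
  · obtain ⟨p, hp, hmax⟩ := hmax
    exact ⟨p, fun q hq => le_of_isChain hc hq hp (hmax q hq)⟩
  push Not at hmax
  set T' := sSup (T '' c)
  have hlt : ∀ p ∈ c, p.T < T' := fun p hp => by
    obtain ⟨q, hq, hpq⟩ := hmax p hp
    exact hpq.trans_le (le_csSup hbdd (mem_image_of_mem _ hq))
  obtain ⟨u, -, hu, huc⟩ := exists_seq_tendsto_sSup (hne.image _) hbdd
  choose ps hps hpsT using huc
  have hcover : ∀ t < T', ∃ n, t ≤ (ps n).T := fun t ht => by
    obtain ⟨n, hn⟩ := (hu.eventually (eventually_gt_nhds ht)).exists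
    exact ⟨n, (hpsT n).symm ▸ hn.le⟩
  obtain ⟨α, y, hα, hαA, hglue⟩ := exists_glue (hc.mono (range_subset_iff.2 hps))
  have hsol : ∀ n, SolvesOn F x α y (ps n).T := fun n =>
    (ps n).solvesOn.congr (hglue n).1 (hglue n).2
  have hT' : 0 < T' := hne.elim fun p hp => p.T_nonneg.trans_lt (hlt p hp)
  obtain ⟨y', hy', hsol', hyS'⟩ := exists_solvesOn_of_forall_lt hF hFb hα hαA hS hT'
    (fun t ht => (hcover t ht).elim fun n hn => (hsol n).mono hn)
    (fun t ht => (hcover t ht.2).elim fun n hn =>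
      (hglue n).2 ⟨ht.1, hn⟩ ▸ (ps n).mem_S t ⟨ht.1, hn⟩)
  let q : PartialSol F A S x := ⟨T', α, y', hT'.le, hα, hαA, hsol', hyS'⟩
  refine ⟨q, fun p hp => ?_⟩
  obtain ⟨n, hn⟩ := hcover p.T (hlt p hp)
  have hTn := hlt _ (hps n)
  exact (le_of_isChain hc hp (hps n) hn).trans
    ⟨hTn.le, (hglue n).1, fun t ht => (hy' ⟨ht.1, ht.2.trans_lt hTn⟩).trans ((hglue n).2 ht)⟩

lemma not_isMax (hF : ContinuousOn (fun p : Vec m × U => F p.1 p.2) (univ ×ˢ A))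
    (hFb : ∀ z, ∀ a ∈ A, ‖F z a‖ ≤ C) (hloc : ∀ z ∈ S, (LocAdmSet F A S z).Nonempty)
    (p : PartialSol F A S x) : ¬ IsMax p := by
  obtain ⟨a, ha, θ, hθ, w, hw, hwS⟩ := hloc _ (p.mem_S p.T ⟨p.T_nonneg, le_rfl⟩)
  have hwsol := hw.solvesOn θ
  let q : PartialSol F A S x :=
    { T := p.T + θ
      α := concatAt p.T p.α fun _ => a
      y := concatAt p.T p.y w
      T_nonneg := by linarith [p.T_nonneg]
      measurable := Measurable.ite measurableSet_Iic p.measurable measurable_const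
      mem_A := fun t => by
        unfold concatAt
        split_ifs
        exacts [p.mem_A t, ha]
      solvesOn := p.solvesOn.concat p.T_nonneg hwsol
        (p.solvesOn.intervalIntegrable hF hFb p.measurable p.mem_A p.T_nonneg)
        (hwsol.intervalIntegrable hF hFb measurable_const (fun _ => ha) hθ.le)
      mem_S := fun t ht => by
        unfold concatAt
        split_ifs with h
        exacts [p.mem_S t ⟨ht.1, h⟩, hwS _ ⟨by linarith, by linarith [ht.2]⟩] }
  have hpq : p ≤ q :=
    ⟨le_add_of_nonneg_right hθ.le, fun t ht => if_pos ht.2, fun t ht => if_pos ht.2⟩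
  exact fun hmax => (hmax hpq).1.not_gt (lt_add_of_pos_right _ hθ)

end PartialSol

theorem exists_admPair_of_forall_locAdmSet_nonempty [TopologicalSpace U] [BorelSpace U]
    [SecondCountableTopology U] {C : ℝ}
    (hF : ContinuousOn (fun p : Vec m × U => F p.1 p.2) (univ ×ˢ A))
    (hFb : ∀ z, ∀ a ∈ A, ‖F z a‖ ≤ C) (hS : IsClosed S) (hx : x ∈ S)
    (hloc : ∀ z ∈ S, (LocAdmSet F A S z).Nonempty) : ∃ α y, AdmPair F A S x α y := by
  by_contra hno
  obtain ⟨a, ha, -⟩ := hloc x hx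
  have : Nonempty (PartialSol F A S x) := ⟨.const hx ha⟩
  obtain ⟨p, hp⟩ := zorn_le_nonempty fun c hc hne =>
    PartialSol.bddAbove_of_isChain hF hFb hS hno hc hne
  exact p.not_isMax hF hFb hloc hp

end Viability

section Network

variable {m N : ℕ} {e : Fin N → Vec m}

lemma isClosed_Gbar (e : Fin N → Vec m) : IsClosed (Gbar e) :=
  isClosed_iUnion_of_finite fun _ => (isCompact_Icc.image (by fun_prop)).isClosed

lemma eventually_mem_span_of_mem_Gbar {j : Fin N} (hj : e j ≠ 0) {ρ : ℝ} (hρ : 0 < ρ) :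
    ∀ᶠ p in 𝓝 (ρ • e j), p ∈ Gbar e → p ∈ ℝ ∙ e j := by
  -- the branches not parallel to `e j` form a closed set avoiding `ρ • e j`
  set K := ⋃ k ∈ {k | e k ∉ ℝ ∙ e j}, (fun r : ℝ => r • e k) '' Icc 0 1
  have hK : IsClosed K := (toFinite _).isClosed_biUnion fun _ _ =>
    (isCompact_Icc.image (by fun_prop)).isClosed
  have hρK : ρ • e j ∉ K := by
    simp only [K, mem_iUnion₂, mem_image, mem_ofPred_eq, not_exists, not_and]
    intro k hk r _ hr
    have hr0 : r ≠ 0 := by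
      rintro rfl
      rw [zero_smul] at hr
      exact smul_ne_zero hρ.ne' hj hr.symm
    apply hk
    rw [← inv_smul_smul₀ hr0 (e k), hr, smul_smul]
    exact Submodule.smul_mem _ _ (Submodule.mem_span_singleton_self _)
  filter_upwards [hK.isOpen_compl.mem_nhds hρK] with p hpK hp
  obtain ⟨k, r, hr, rfl⟩ := mem_iUnion.1 hp
  by_contra hspan
  exact hpK (mem_iUnion₂.2 ⟨k, fun hk => hspan (Submodule.smul_mem _ _ hk), r, hr, rfl⟩)

section

variable {U : Type} [TopologicalSpace U] [MeasurableSpace U] [BorelSpace U]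
  [SecondCountableTopology U] {F : Vec m → U → Vec m} {A : Set U} {C : ℝ}

/-- Tangency to the branch at its interior points, passed to the junction by continuity. -/
lemma apply_zero_mem_span (hF : ContinuousOn (fun p : Vec m × U => F p.1 p.2) (univ ×ˢ A))
    (hFb : ∀ z, ∀ a ∈ A, ‖F z a‖ ≤ C) {a : U} (ha : a ∈ A) {j : Fin N} (hj : e j ≠ 0)
    (hloc : ∀ ρ ∈ Ioo (0:ℝ) 1, LocAdm F (Gbar e) (ρ • e j) a) : F 0 a ∈ ℝ ∙ e j := by
  have hlim : Tendsto (fun ρ : ℝ => F (ρ • e j) a) (𝓝[>] 0) (𝓝 (F 0 a)) := by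
    have hc : Continuous fun ρ : ℝ => F (ρ • e j) a :=
      (hF.continuous_apply_of_mem ha).comp (continuous_id.smul continuous_const)
    simpa using (hc.tendsto 0).mono_left nhdsWithin_le_nhds
  refine (Submodule.closed_of_finiteDimensional _).mem_of_tendsto hlim ?_
  filter_upwards [Ioo_mem_nhdsGT one_pos] with ρ hρ
  exact (hloc ρ hρ).apply_mem hF hFb ha
    (Submodule.smul_mem _ _ (Submodule.mem_span_singleton_self _))
    (eventually_mem_span_of_mem_Gbar hj hρ.1)

end

variable {C : ℝ} {d : ℕ} {E : Type} {A : Set (Vec d)} {f : E → Vec m → Vec d → Vec m}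
  {Asets : E → Fin N → Set (Vec d)} {act : Fin N → Set E} {β η κ : ℝ}

lemma exists_mem_Asets_apply_zero_eq_smul (he : ∀ j, ‖e j‖ = 1) (γ : E)
    (hF : ContinuousOn (fun p : Vec m × Vec d => f γ p.1 p.2) (univ ×ˢ A))
    (hFb : ∀ z, ∀ a ∈ A, ‖f γ z a‖ ≤ C) (hβ : 0 < β) (hAa : AssumptionAa e A f Asets β)
    (hAb : AssumptionAb e f Asets act β η κ) (j : Fin N) :
    ∃ a ∈ Asets γ j, ∃ r : ℝ, 0 ≤ r ∧ f γ 0 a = r • e j := by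
  by_cases hact : γ ∈ act j
  · obtain ⟨a, ha, -, -, hβa, -⟩ := hAb.1 j γ hact
    have hj : e j ≠ 0 := norm_ne_zero_iff.1 (by simp [he j])
    have hloc : ∀ ρ ∈ Ioo (0:ℝ) 1, LocAdm (f γ) (Gbar e) (ρ • e j) a := fun ρ hρ =>
      ((hAa.2.1 γ j _ ⟨ρ, hρ, rfl⟩).symm ▸ ha : a ∈ LocAdmSet (f γ) A (Gbar e) _).2
    obtain ⟨r, hr⟩ := Submodule.mem_span_singleton.1
      (apply_zero_mem_span hF hFb ((hAa.1 γ j).2 ha) hj hloc)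
    rw [← hr, real_inner_smul_left, real_inner_self_eq_norm_sq, he j] at hβa
    exact ⟨a, ha, r, by linarith, hr.symm⟩
  · obtain ⟨-, ⟨a, ha, h0⟩, -⟩ := hAb.2 j γ hact
    exact ⟨a, ha, 0, le_rfl, by rw [h0, zero_smul]⟩

lemma locAdmSet_nonempty_of_mem_Gbar (he : ∀ j, ‖e j‖ = 1) (γ : E)
    (hF : ContinuousOn (fun p : Vec m × Vec d => f γ p.1 p.2) (univ ×ˢ A))
    (hFb : ∀ z, ∀ a ∈ A, ‖f γ z a‖ ≤ C) (hβ : 0 < β) (hAa : AssumptionAa e A f Asets β)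
    (hAb : AssumptionAb e f Asets act β η κ) {z : Vec m} (hz : z ∈ Gbar e) :
    (LocAdmSet (f γ) A (Gbar e) z).Nonempty := by
  obtain ⟨j, s, hs, rfl⟩ := mem_iUnion.1 hz
  have hzero := exists_mem_Asets_apply_zero_eq_smul he γ hF hFb hβ hAa hAb j
  obtain ⟨hAsets, hJ, h0, hEnd, -⟩ := hAa
  dsimp only
  rcases hs.1.eq_or_lt with rfl | hs0
  · obtain ⟨a, ha, hr⟩ := hzero
    rw [zero_smul, h0 γ]
    exact ⟨a, mem_iUnion.2 ⟨j, ha, hr⟩⟩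
  rcases hs.2.eq_or_lt with rfl | hs1
  · rw [one_smul, (hEnd γ j).1]
    exact (hEnd γ j).2
  · rw [hJ γ j _ ⟨s, ⟨hs0, hs1⟩, rfl⟩]
    exact (hAsets γ j).1

end Network

theorem admissible_controls_nonempty_general
    (m d N : ℕ)
    (E : Type)
    (e : Fin N → Vec m) (he : ∀ j, ‖e j‖ = 1)
    (A : Set (Vec d))
    (f : E → Vec m → Vec d → Vec m)
    (C : ℝ) (hA1 : AssumptionA1 A f C)
    (Asets : E → Fin N → Set (Vec d)) (act : Fin N → Set E)
    (β η κc : ℝ) (hβ : 0 < β)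
    (hAa : AssumptionAa e A f Asets β)
    (hAb : AssumptionAb e f Asets act β η κc) :
    ∀ x ∈ Gbar e, ∀ γ : E, ∃ (α : ℝ → Vec d) (y : ℝ → Vec m),
      AdmPair (f γ) A (Gbar e) x α y := by
  intro x hx γ
  obtain ⟨hUC, -, hFb⟩ := hA1 γ
  exact exists_admPair_of_forall_locAdmSet_nonempty hUC.continuousOn hFb (isClosed_Gbar e) hx
    fun z hz => locAdmSet_nonempty_of_mem_Gbar he γ hUC.continuousOn hFb hβ hAa hAb hz

/-- Under (A1), (Aa) and (Ab), for every `x ∈ Ḡ` and every mode `γ`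
the set `𝒜_{γ,x}` of admissible controls is nonempty: there is a Borel measurable
control with values in `A` whose trajectory starting from `x` stays in `Ḡ` forever. -/
theorem admissible_controls_nonempty
    (m d N : ℕ) (hm : 1 ≤ m) (hd : 1 ≤ d) (hN : 2 ≤ N)
    (E : Type) [Fintype E] [Nonempty E]
    (e : Fin N → Vec m) (he : ∀ j, ‖e j‖ = 1) (heinj : Function.Injective e)
    (A : Set (Vec d)) (hAcomp : IsCompact A)
    (f : E → Vec m → Vec d → Vec m)
    (C : ℝ) (hC : 0 < C) (hA1 : AssumptionA1 A f C)
    (Asets : E → Fin N → Set (Vec d)) (act : Fin N → Set E)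
    (β η κc : ℝ) (hβ : 0 < β) (hη : η ∈ Ioo (0:ℝ) 1) (hκ : κc ∈ Ico (0:ℝ) 1)
    (hAa : AssumptionAa e A f Asets β)
    (hAb : AssumptionAb e f Asets act β η κc) :
    ∀ x ∈ Gbar e, ∀ γ : E, ∃ (α : ℝ → Vec d) (y : ℝ → Vec m),
      AdmPair (f γ) A (Gbar e) x α y :=
  admissible_controls_nonempty_general m d N E e he A f C hA1 Asets act β η κc hβ hAa hAb
end
end

section
/- Let C > 1, θ ∈ (0,1), q ∈ (0,1), ε ≥ 0, M ≥ 0 and ρ ∈ (0,1]. Let ω, σ : (0,∞) → [0,M] be nondecreasing with lim_{r→0+} σ(r) = 0, and suppose that ω(r) ≤ ε + C·r^θ + σ(C·r^θ) + q·ω(C·r^θ) for every r ∈ (0, ρ]. Then lim_{r→0+} ω(r) exists and is at most ε/(1 − q). -/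
open Set Filter Real
open scoped Topology

/-- Iteration lemma for continuity moduli: if the nondecreasing
bounded functions `ω, σ : (0,∞) → [0,M]` satisfy
`ω(r) ≤ ε + C r^θ + σ(C r^θ) + q ω(C r^θ)` for all small `r`, with `C > 1`,
`θ, q ∈ (0,1)` and `σ(0+) = 0`, then `ω` has a limit at `0+` and this limit is at
most `ε/(1-q)`. -/
theorem modulus_iteration_lemma
    (C θ q ε M ρ : ℝ) (hC : 1 < C) (hθ : θ ∈ Ioo (0:ℝ) 1) (hq : q ∈ Ioo (0:ℝ) 1)
    (hε : 0 ≤ ε) (hM : 0 ≤ M) (hρ : ρ ∈ Ioc (0:ℝ) 1)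
    (ω σ : ℝ → ℝ)
    (hωb : ∀ r : ℝ, 0 < r → ω r ∈ Icc (0:ℝ) M)
    (hσb : ∀ r : ℝ, 0 < r → σ r ∈ Icc (0:ℝ) M)
    (hωmono : ∀ r s : ℝ, 0 < r → r ≤ s → ω r ≤ ω s)
    (hσmono : ∀ r s : ℝ, 0 < r → r ≤ s → σ r ≤ σ s)
    (hσ0 : Tendsto σ (nhdsWithin 0 (Ioi 0)) (nhds 0))
    (hiter : ∀ r ∈ Ioc (0:ℝ) ρ, ω r ≤ ε + C * r ^ θ + σ (C * r ^ θ) + q * ω (C * r ^ θ)) :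
    ∃ L : ℝ, Tendsto ω (nhdsWithin 0 (Ioi 0)) (nhds L) ∧ L ≤ ε / (1 - q) := by
  obtain ⟨hθ0, hθ1⟩ := hθ
  obtain ⟨hq0, hq1⟩ := hq
  obtain ⟨hρ0, hρ1⟩ := hρ
  have hSne : (ω '' Ioi 0).Nonempty := ⟨ω 1, 1, by norm_num, rfl⟩
  have hSbd : BddBelow (ω '' Ioi 0) := by
    refine ⟨0, ?_⟩
    rintro x ⟨r, hr, rfl⟩
    exact (hωb r hr).1
  set L := sInf (ω '' Ioi 0) with hLdef
  have hLle : ∀ r, 0 < r → L ≤ ω r := fun r hr => csInf_le hSbd ⟨r, hr, rfl⟩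
  have hlim : Tendsto ω (𝓝[>] (0:ℝ)) (𝓝 L) := by
    rw [tendsto_order]
    constructor
    · intro a ha
      filter_upwards [self_mem_nhdsWithin] with r hr
      exact ha.trans_le (hLle r hr)
    · intro b hb
      obtain ⟨x, ⟨r0, hr0, rfl⟩, hx⟩ := exists_lt_of_csInf_lt hSne hb
      have hmem : Ioo (0:ℝ) r0 ∈ 𝓝[>] (0:ℝ) := Ioo_mem_nhdsGT_of_mem ⟨le_refl 0, hr0⟩
      filter_upwards [hmem] with r hr
      exact lt_of_le_of_lt (hωmono r r0 hr.1 hr.2.le) hx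
  refine ⟨L, hlim, ?_⟩
  have hg : Tendsto (fun r : ℝ => C * r ^ θ) (𝓝[>] (0:ℝ)) (𝓝[>] (0:ℝ)) := by
    apply tendsto_nhdsWithin_of_tendsto_nhds_of_eventually_within
    · have h1 : Tendsto (fun r : ℝ => r ^ θ) (𝓝[>] (0:ℝ)) (𝓝 (0:ℝ)) := by
        have h2 := (Real.continuousAt_rpow_const 0 θ (Or.inr hθ0.le)).tendsto
        simpa [Real.zero_rpow hθ0.ne'] using h2.mono_left nhdsWithin_le_nhds
      simpa using h1.const_mul C
    · filter_upwards [self_mem_nhdsWithin] with r hr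
      exact mul_pos (lt_trans zero_lt_one hC) (Real.rpow_pos_of_pos hr θ)
  have hωg : Tendsto (fun r => ω (C * r ^ θ)) (𝓝[>] (0:ℝ)) (𝓝 L) := hlim.comp hg
  have hσg : Tendsto (fun r => σ (C * r ^ θ)) (𝓝[>] (0:ℝ)) (𝓝 0) := hσ0.comp hg
  have hCg : Tendsto (fun r : ℝ => C * r ^ θ) (𝓝[>] (0:ℝ)) (𝓝 0) :=
    hg.mono_right nhdsWithin_le_nhds
  have key : L ≤ ε + 0 + 0 + q * L := by
    refine le_of_tendsto_of_tendsto hlim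
      (((tendsto_const_nhds.add hCg).add hσg).add (hωg.const_mul q)) ?_
    filter_upwards [Ioc_mem_nhdsGT_of_mem ⟨le_refl 0, hρ0⟩] with r hr
    exact hiter r hr
  have h1q : 0 < 1 - q := by linarith
  rw [le_div_iff₀ h1q]
  nlinarith [key]
end
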